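/- A ℂ-linear functor F : SVect^n → SVect of rank vector r = (r₁,…,r_n) is represented by the object (ℂ^{r₁},…,ℂ^{r_n}), i.e., F is naturally isomorphic to Hom_{SVect^n}((ℂ^{r₁},…,ℂ^{r_n}), −). Consequently, if G : SVect^n → SVect has rank vector s, then Nat(F,G) is in bijection with G(ℂ^{r₁},…,ℂ^{r_n}) ≅ ℂ^{r₁s₁+⋯+r_ns_n}. -/

import Mathlib

open CategoryTheory Matrix
open scoped BigOperators
set_option linter.unusedSectionVars false
set_option linter.unusedVariables false

/-- The skeletal category `SVect^n`: objects are `n`-tuples of natural numbers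
(representing `(ℂ^{a₁},…,ℂ^{a_n})`), morphisms are tuples of complex matrices. -/
def SVectn (n : ℕ) : Type := Fin n → ℕ

namespace SVectn

noncomputable instance (n : ℕ) : Category (SVectn n) where
  Hom a b := ∀ j, Matrix (Fin (b j)) (Fin (a j)) ℂ
  id _ := fun _ => 1
  comp f g := fun j => g j * f j
  id_comp f := by funext j; exact Matrix.mul_one _
  comp_id f := by funext j; exact Matrix.one_mul _
  assoc f g h := by funext j; exact (Matrix.mul_assoc _ _ _).symm

noncomputable instance (n : ℕ) : Preadditive (SVectn n) where
  homGroup a b := inferInstanceAs (AddCommGroup (∀ j, Matrix (Fin (b j)) (Fin (a j)) ℂ))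
  add_comp a b c f f' g := by funext j; exact Matrix.mul_add _ _ _
  comp_add a b c f g g' := by funext j; exact Matrix.add_mul _ _ _

noncomputable instance (n : ℕ) : CategoryTheory.Linear ℂ (SVectn n) where
  homModule a b := inferInstanceAs (Module ℂ (∀ j, Matrix (Fin (b j)) (Fin (a j)) ℂ))
  smul_comp a b c s f g := by
    funext j
    show g j * (s • f j) = s • (g j * f j)
    exact Matrix.mul_smul _ _ _
  comp_smul a b c f s g := by
    funext j
    show (s • g j) * f j = s • (g j * f j)
    exact Matrix.smul_mul _ _ _

end SVectn

/-- The object `ℂ(j,n) = (0,…,ℂ,…,0)` of `SVect^n`, with `ℂ` in position `j`. -/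
def unitObj (n : ℕ) (j : Fin n) : SVectn n := fun j' => if j' = j then 1 else 0

/-- The underlying-set functor `SVect ⥤ Type`, sending `ℂ^a` to its set of vectors and
a matrix to the induced linear map. -/
noncomputable def USVect : SVectn 1 ⥤ Type where
  obj a := Fin (a 0) → ℂ
  map f := TypeCat.ofHom (fun v => (f 0).mulVec v)
  map_id a := by
    ext v
    exact congrFun (Matrix.one_mulVec v) _
  map_comp f g := by
    ext v
    exact congrFun (Matrix.mulVec_mulVec v (g 0) (f 0)).symm _

namespace Stmt15Aux

variable {n : ℕ}

@[simp] lemma comp_apply' {a b c : SVectn n} (f : a ⟶ b) (g : b ⟶ c) (j : Fin n) :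
    (f ≫ g) j = g j * f j := rfl

@[simp] lemma id_apply' (a : SVectn n) (j : Fin n) : (𝟙 a : a ⟶ a) j = 1 := rfl

@[simp] lemma add_apply' {a b : SVectn n} (f g : a ⟶ b) (j : Fin n) :
    (f + g) j = f j + g j := rfl

@[simp] lemma smul_apply' {a b : SVectn n} (c : ℂ) (f : a ⟶ b) (j : Fin n) :
    (c • f) j = c • f j := rfl

@[simp] lemma zero_apply' {a b : SVectn n} (j : Fin n) : (0 : a ⟶ b) j = 0 := rfl

lemma unit_self (j : Fin n) : unitObj n j j = 1 := by simp [unitObj]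

lemma unit_ne {j j' : Fin n} (h : j' ≠ j) : unitObj n j j' = 0 := by simp [unitObj, h]

/-- the unique element of `Fin (unitObj n j j)` -/
def u0 (j : Fin n) : Fin (unitObj n j j) := ⟨0, by simp [unit_self]⟩

instance unit_sub (j : Fin n) : Subsingleton (Fin (unitObj n j j)) := by
  rw [unit_self]; infer_instance

def incl (a : SVectn n) (j : Fin n) (i : Fin (a j)) : unitObj n j ⟶ a :=
  fun j' k _ => if j' = j ∧ (k : ℕ) = (i : ℕ) then 1 else 0

def proj (a : SVectn n) (j : Fin n) (i : Fin (a j)) : a ⟶ unitObj n j :=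
  fun j' _ l => if j' = j ∧ (l : ℕ) = (i : ℕ) then 1 else 0

lemma hom_unit_ext {j j' : Fin n} (h : j ≠ j') (f g : unitObj n j ⟶ unitObj n j') : f = g := by
  funext j'' k l
  by_cases h1 : j'' = j'
  · subst h1
    exact absurd l.isLt (by simp [unit_ne (Ne.symm h)])
  · exact absurd k.isLt (by simp [unit_ne h1])


/-- evaluation of a hom at an entry, as an `AddMonoidHom` -/
def evalHom {a b : SVectn n} (j : Fin n) (k : Fin (b j)) (l : Fin (a j)) : (a ⟶ b) →+ ℂ where
  toFun f := f j k l
  map_zero' := rfl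
  map_add' _ _ := rfl

lemma eval_sum {a b : SVectn n} {ι : Type} (s : Finset ι) (f : ι → (a ⟶ b))
    (j : Fin n) (k : Fin (b j)) (l : Fin (a j)) :
    (∑ i ∈ s, f i) j k l = ∑ i ∈ s, f i j k l := map_sum (evalHom j k l) f s

lemma incl_comp_proj_ne {a b : SVectn n} (f : a ⟶ b) {j j'' : Fin n} (h : j ≠ j'')
    (i' : Fin (a j)) (i : Fin (b j'')) :
    incl a j i' ≫ f ≫ proj b j'' i = 0 := hom_unit_ext h _ _

lemma incl_comp_proj_eq {a b : SVectn n} (f : a ⟶ b) (j : Fin n) (i' : Fin (a j)) (i : Fin (b j)) :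
    incl a j i' ≫ f ≫ proj b j i = f j i i' • 𝟙 (unitObj n j) := by
  funext j' k l
  by_cases h : j' = j
  · subst h
    have hkl : k = l := Subsingleton.elim k l
    subst hkl
    show (((proj b j' i) j' * f j') * (incl a j' i') j') k k
        = (f j' i i' • (1 : Matrix (Fin (unitObj n j' j')) (Fin (unitObj n j' j')) ℂ)) k k
    rw [Matrix.smul_apply, Matrix.one_apply_eq, smul_eq_mul, mul_one, Matrix.mul_apply]
    have hstep : ∀ m : Fin (a j'), ((proj b j' i) j' * f j') k m = f j' i m := by
      intro m
      rw [Matrix.mul_apply]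
      rw [Finset.sum_eq_single i (fun q _ hq => by
        have : (q : ℕ) ≠ (i : ℕ) := fun hh => hq (Fin.ext hh)
        simp [proj, this]) (by simp)]
      simp [proj]
    simp only [hstep]
    rw [Finset.sum_eq_single i' (fun m _ hm => by
      have : (m : ℕ) ≠ (i' : ℕ) := fun hh => hm (Fin.ext hh)
      simp [incl, this]) (by simp)]
    simp [incl]
  · exact absurd k.isLt (by simp [unit_ne h])

lemma sum_proj_incl (a : SVectn n) :
    (∑ j, ∑ i : Fin (a j), proj a j i ≫ incl a j i) = 𝟙 a := by
  funext j' k l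
  have h1 : ∀ (j : Fin n) (i : Fin (a j)),
      ((proj a j i ≫ incl a j i) j') k l
        = if j = j' ∧ (k : ℕ) = (i : ℕ) ∧ (l : ℕ) = (i : ℕ) then 1 else 0 := by
    intro j i
    show ((incl a j i) j' * (proj a j i) j') k l = _
    rw [Matrix.mul_apply]
    by_cases h : j' = j
    · subst h
      rw [Fintype.sum_subsingleton _ (u0 j')]
      simp only [incl, proj, true_and]
      split_ifs <;> simp_all
    · have h0 : unitObj n j j' = 0 := unit_ne h
      rw [Finset.sum_eq_zero (fun m _ => absurd m.isLt (by simp [h0]))]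
      have : ¬ (j = j') := fun hh => h hh.symm
      simp [this]
  rw [eval_sum]
  simp only [fun j => eval_sum (Finset.univ : Finset (Fin (a j)))
    (fun i => proj a j i ≫ incl a j i) j' k l, h1]
  rw [Finset.sum_eq_single j' (fun b _ hb => by
    rw [Finset.sum_eq_zero]; intro i _; simp [hb]) (by simp)]
  show _ = (1 : Matrix (Fin (a j')) (Fin (a j')) ℂ) k l
  rcases eq_or_ne k l with rfl | hkl
  · rw [Matrix.one_apply_eq]
    rw [Finset.sum_eq_single k (fun i _ hi => by
      have : (k : ℕ) ≠ (i : ℕ) := fun hh => hi (Fin.ext hh.symm)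
      simp [this]) (by simp)]
    simp
  · rw [Matrix.one_apply_ne hkl]
    apply Finset.sum_eq_zero
    intro i _
    simp only [ite_eq_right_iff]
    rintro ⟨-, h1, h2⟩
    exact absurd (Fin.ext (h1.trans h2.symm)) hkl

lemma incl_comp (a : SVectn n) {b : SVectn n} (g : b ⟶ a) (j : Fin n) (i' : Fin (b j)) :
    incl b j i' ≫ g = ∑ i : Fin (a j), g j i i' • incl a j i := by
  funext j' k l
  rw [eval_sum]
  by_cases h : j' = j
  · subst h
    have hl : l = u0 j' := Subsingleton.elim _ _
    subst hl
    show (g j' * (incl b j' i') j') k (u0 j') = _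
    rw [Matrix.mul_apply]
    rw [Finset.sum_eq_single i' (fun m _ hm => by
      have : (m : ℕ) ≠ (i' : ℕ) := fun hh => hm (Fin.ext hh)
      simp [incl, this]) (by simp)]
    rw [Finset.sum_eq_single k (fun i _ hi => by
      have : (k : ℕ) ≠ (i : ℕ) := fun hh => hi (Fin.ext hh.symm)
      show g j' i i' • (incl a j' i) j' k (u0 j') = 0
      simp [incl, this]) (by simp)]
    simp [incl]
  · exact absurd l.isLt (by simp [unit_ne h])


section Functors

variable (F : SVectn n ⥤ SVectn 1) [F.Additive] [F.Linear ℂ]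
variable (r : SVectn n)

/-- standard basis vectors of `F(unit j)`, indexed by `Fin (r j)` via `hr` -/
def bvec (j : Fin n) (i' : Fin (r j)) : Fin (F.obj (unitObj n j) 0) → ℂ :=
  fun k => if (k : ℕ) = (i' : ℕ) then 1 else 0

/-- the comparison map `Hom(r, a) → F a` -/
noncomputable def Phi (a : SVectn n) (f : r ⟶ a) : Fin (F.obj a 0) → ℂ :=
  ∑ j, ∑ i' : Fin (r j), (F.map (incl r j i' ≫ f) 0).mulVec (bvec F r j i')

variable (hr : ∀ j, r j = F.obj (unitObj n j) 0)

/-- the inverse comparison map `F a → Hom(r, a)` -/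
noncomputable def Psi (a : SVectn n) (x : Fin (F.obj a 0) → ℂ) : r ⟶ a :=
  fun j i i' => (F.map (proj a j i) 0).mulVec x (Fin.cast (hr j) i')

lemma mulVec_sum' {N M : Type} [Fintype M] {ι : Type} (s : Finset ι)
    (A : Matrix N M ℂ) (v : ι → M → ℂ) :
    A.mulVec (∑ i ∈ s, v i) = ∑ i ∈ s, A.mulVec (v i) :=
  map_sum A.mulVecLin v s

lemma sum_mulVec' {N M : Type} [Fintype M] {ι : Type} (s : Finset ι)
    (A : ι → Matrix N M ℂ) (v : M → ℂ) :
    (∑ i ∈ s, A i).mulVec v = ∑ i ∈ s, (A i).mulVec v := by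
  funext k
  rw [Finset.sum_apply]
  simp only [Matrix.mulVec, dotProduct, Finset.sum_apply, Matrix.sum_apply,
    Finset.sum_mul]
  exact Finset.sum_comm

lemma comp_zero_apply {u v : SVectn 1} (f g : u ⟶ v) (h : f = g) : f 0 = g 0 := by rw [h]

lemma map1_comp {a b c : SVectn n} (f : a ⟶ b) (g : b ⟶ c) :
    F.map (f ≫ g) 0 = F.map g 0 * F.map f 0 := by rw [F.map_comp]; rfl

def evalMat {u v : SVectn 1} : (u ⟶ v) →+ Matrix (Fin (v 0)) (Fin (u 0)) ℂ where
  toFun f := f 0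
  map_zero' := rfl
  map_add' _ _ := rfl

lemma eval0_sum {u v : SVectn 1} {ι : Type} (s : Finset ι) (f : ι → (u ⟶ v)) :
    (∑ i ∈ s, f i) 0 = ∑ i ∈ s, f i 0 := map_sum (evalMat) f s

lemma Psi_Phi (a : SVectn n) (f : r ⟶ a) : Psi F r hr a (Phi F r a f) = f := by
  funext j i i'
  show (F.map (proj a j i) 0).mulVec (Phi F r a f) (Fin.cast (hr j) i') = f j i i'
  rw [Phi, mulVec_sum', Finset.sum_apply]
  have hterm : ∀ j'' : Fin n,
      (F.map (proj a j i) 0).mulVec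
        (∑ i'' : Fin (r j''), (F.map (incl r j'' i'' ≫ f) 0).mulVec (bvec F r j'' i''))
        (Fin.cast (hr j) i')
      = ∑ i'' : Fin (r j''),
          ((F.map (incl r j'' i'' ≫ f ≫ proj a j i) 0).mulVec (bvec F r j'' i''))
            (Fin.cast (hr j) i') := by
    intro j''
    rw [mulVec_sum', Finset.sum_apply]
    refine Finset.sum_congr rfl fun i'' _ => ?_
    rw [Matrix.mulVec_mulVec, ← map1_comp, Category.assoc]
  simp only [hterm]
  rw [Finset.sum_eq_single j (fun j'' _ hne => Finset.sum_eq_zero fun i'' _ => by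
    rw [incl_comp_proj_ne f hne i'' i, Functor.map_zero, zero_apply', Matrix.zero_mulVec]
    rfl) (by simp)]
  have hval : ∀ i'' : Fin (r j),
      ((F.map (incl r j i'' ≫ f ≫ proj a j i) 0).mulVec (bvec F r j i''))
        (Fin.cast (hr j) i')
      = f j i i'' * (if (i' : ℕ) = (i'' : ℕ) then 1 else 0) := by
    intro i''
    rw [incl_comp_proj_eq f j i'' i, Functor.map_smul, F.map_id, smul_apply', id_apply',
      Matrix.smul_mulVec, Matrix.one_mulVec]
    simp [bvec]
  simp only [hval]
  rw [Finset.sum_eq_single i' (fun m _ hm => by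
    have : (i' : ℕ) ≠ (m : ℕ) := fun hh => hm (Fin.ext hh.symm)
    simp [this]) (by simp)]
  simp

lemma Phi_Psi (a : SVectn n) (x : Fin (F.obj a 0) → ℂ) : Phi F r a (Psi F r hr a x) = x := by
  rw [Phi]
  have h1 : ∀ (j : Fin n) (i' : Fin (r j)),
      (F.map (incl r j i' ≫ Psi F r hr a x) 0).mulVec (bvec F r j i')
      = ∑ i : Fin (a j),
          (Psi F r hr a x) j i i' • (F.map (incl a j i) 0).mulVec (bvec F r j i') := by
    intro j i'
    rw [incl_comp a (Psi F r hr a x) j i', Functor.map_sum, eval0_sum, sum_mulVec']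
    refine Finset.sum_congr rfl fun i _ => ?_
    rw [Functor.map_smul, smul_apply', Matrix.smul_mulVec]
  simp only [h1]
  have h2 : ∀ j : Fin n,
      (∑ i' : Fin (r j), ∑ i : Fin (a j),
        (Psi F r hr a x) j i i' • (F.map (incl a j i) 0).mulVec (bvec F r j i'))
      = ∑ i : Fin (a j),
          (F.map (incl a j i) 0).mulVec ((F.map (proj a j i) 0).mulVec x) := by
    intro j
    rw [Finset.sum_comm]
    refine Finset.sum_congr rfl fun i _ => ?_
    have h3 : ∑ i' : Fin (r j), (Psi F r hr a x) j i i' • bvec F r j i'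
        = (F.map (proj a j i) 0).mulVec x := by
      funext k
      rw [Finset.sum_apply]
      rw [Finset.sum_eq_single (Fin.cast (hr j).symm k) (fun m _ hm => by
        have : (k : ℕ) ≠ (m : ℕ) := fun hh => hm (Fin.ext (by simpa using hh.symm))
        simp [bvec, this]) (by simp)]
      show (Psi F r hr a x) j i (Fin.cast (hr j).symm k) • bvec F r j _ k = _
      have hidx : Fin.cast (hr j) (Fin.cast (hr j).symm k) = k := Fin.ext (by simp)
      show (F.map (proj a j i) 0).mulVec x (Fin.cast (hr j) (Fin.cast (hr j).symm k))
          • bvec F r j (Fin.cast (hr j).symm k) k = _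
      rw [hidx]
      simp [bvec]
    calc ∑ i' : Fin (r j), (Psi F r hr a x) j i i' • (F.map (incl a j i) 0).mulVec (bvec F r j i')
        = (F.map (incl a j i) 0).mulVec (∑ i' : Fin (r j), (Psi F r hr a x) j i i' • bvec F r j i') := by
          rw [mulVec_sum']
          exact Finset.sum_congr rfl fun i' _ => by rw [Matrix.mulVec_smul]
      _ = (F.map (incl a j i) 0).mulVec ((F.map (proj a j i) 0).mulVec x) := by rw [h3]
  simp only [h2]
  have h4 : ∀ (j : Fin n) (i : Fin (a j)),
      (F.map (incl a j i) 0).mulVec ((F.map (proj a j i) 0).mulVec x)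
      = (F.map (proj a j i ≫ incl a j i) 0).mulVec x := by
    intro j i
    rw [Matrix.mulVec_mulVec, map1_comp]
  simp only [h4]
  have h5 : ∑ j, ∑ i : Fin (a j), (F.map (proj a j i ≫ incl a j i) 0).mulVec x
      = (F.map (∑ j, ∑ i : Fin (a j), proj a j i ≫ incl a j i) 0).mulVec x := by
    rw [Functor.map_sum, eval0_sum, sum_mulVec']
    refine Finset.sum_congr rfl fun j _ => ?_
    rw [Functor.map_sum, eval0_sum, sum_mulVec']
  rw [h5, sum_proj_incl, F.map_id, id_apply', Matrix.one_mulVec]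

lemma Phi_natural {a b : SVectn n} (g : a ⟶ b) (f : r ⟶ a) :
    Phi F r b (f ≫ g) = (F.map g 0).mulVec (Phi F r a f) := by
  rw [Phi, Phi, mulVec_sum']
  refine Finset.sum_congr rfl fun j _ => ?_
  rw [mulVec_sum']
  refine Finset.sum_congr rfl fun i' _ => ?_
  rw [Matrix.mulVec_mulVec, ← map1_comp, Category.assoc]

lemma Phi_add (a : SVectn n) (f g : r ⟶ a) :
    Phi F r a (f + g) = Phi F r a f + Phi F r a g := by
  rw [Phi, Phi, Phi, ← Finset.sum_add_distrib]
  refine Finset.sum_congr rfl fun j _ => ?_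
  rw [← Finset.sum_add_distrib]
  refine Finset.sum_congr rfl fun i' _ => ?_
  rw [Preadditive.comp_add, F.map_add, add_apply', Matrix.add_mulVec]

lemma Phi_smul (a : SVectn n) (c : ℂ) (f : r ⟶ a) :
    Phi F r a (c • f) = c • Phi F r a f := by
  rw [Phi, Phi, Finset.smul_sum]
  refine Finset.sum_congr rfl fun j _ => ?_
  rw [Finset.smul_sum]
  refine Finset.sum_congr rfl fun i' _ => ?_
  rw [CategoryTheory.Linear.comp_smul, Functor.map_smul, smul_apply',
    Matrix.smul_mulVec]

end Functors

section Iso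

variable (F : SVectn n ⥤ SVectn 1) [F.Additive] [F.Linear ℂ]
variable (r : SVectn n) (hr : ∀ j, r j = F.obj (unitObj n j) 0)

noncomputable def PhiEquiv (a : SVectn n) : (r ⟶ a) ≃ (Fin (F.obj a 0) → ℂ) where
  toFun := Phi F r a
  invFun := Psi F r hr a
  left_inv := Psi_Phi F r hr a
  right_inv := Phi_Psi F r hr a

noncomputable def repIso : coyoneda.obj (Opposite.op r) ≅ F ⋙ USVect :=
  NatIso.ofComponents (fun a => (PhiEquiv F r hr a).toIso)
    (fun {a b} g => by ext f; exact Phi_natural F r g f)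

lemma Phi_eq (a : SVectn n) (f : r ⟶ a) :
    Phi F r a f = (F.map f 0).mulVec (Phi F r r (𝟙 r)) := by
  have := Phi_natural F r f (𝟙 r)
  rwa [Category.id_comp] at this

lemma matrix_ext_mulVec {N M : Type} [Fintype M] [DecidableEq M] {A B : Matrix N M ℂ}
    (h : ∀ v, A.mulVec v = B.mulVec v) : A = B := by
  ext k l
  have := congrFun (h (Pi.single l 1)) k
  simpa using this

lemma hom1_ext {u v : SVectn 1} {f g : u ⟶ v} (h : f 0 = g 0) : f = g := by
  funext j
  have hj : j = 0 := Subsingleton.elim j 0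
  rw [hj]; exact h

variable (G : SVectn n ⥤ SVectn 1) [G.Additive] [G.Linear ℂ]

noncomputable def Efun (η : F ⟶ G) : Fin (G.obj r 0) → ℂ :=
  (η.app r 0).mulVec (Phi F r r (𝟙 r))

lemma app_mulVec (η : F ⟶ G) (a : SVectn n) (f : r ⟶ a) :
    (η.app a 0).mulVec (Phi F r a f) = (G.map f 0).mulVec (Efun F r G η) := by
  rw [Phi_eq F r a f, Matrix.mulVec_mulVec, Efun, Matrix.mulVec_mulVec]
  have hAC : η.app a 0 * F.map f 0 = G.map f 0 * η.app r 0 :=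
    calc η.app a 0 * F.map f 0 = (F.map f ≫ η.app a) 0 := rfl
      _ = (η.app r ≫ G.map f) 0 := by rw [η.naturality f]
      _ = G.map f 0 * η.app r 0 := rfl
  rw [hAC]

include hr in
lemma E_inj : Function.Injective (Efun F r G) := by
  intro η η' h
  apply NatTrans.ext
  funext a
  apply hom1_ext
  apply matrix_ext_mulVec
  intro v
  have hv : v = Phi F r a (Psi F r hr a v) := (Phi_Psi F r hr a v).symm
  rw [hv, app_mulVec, app_mulVec, h]

noncomputable def Tlin (y : Fin (G.obj r 0) → ℂ) (a : SVectn n) :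
    (Fin (F.obj a 0) → ℂ) →ₗ[ℂ] (Fin (G.obj a 0) → ℂ) where
  toFun x := (G.map (Psi F r hr a x) 0).mulVec y
  map_add' x x' := by
    have h : Psi F r hr a (x + x') = Psi F r hr a x + Psi F r hr a x' := by
      funext j i i'
      show (F.map (proj a j i) 0).mulVec (x + x') _ = _
      rw [Matrix.mulVec_add]; rfl
    show (G.map (Psi F r hr a (x + x')) 0).mulVec y
        = (G.map (Psi F r hr a x) 0).mulVec y + (G.map (Psi F r hr a x') 0).mulVec y
    rw [h, G.map_add, add_apply', Matrix.add_mulVec]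
  map_smul' c x := by
    have h : Psi F r hr a (c • x) = c • Psi F r hr a x := by
      funext j i i'
      show (F.map (proj a j i) 0).mulVec (c • x) _ = _
      rw [Matrix.mulVec_smul]; rfl
    show (G.map (Psi F r hr a (c • x)) 0).mulVec y
        = c • (G.map (Psi F r hr a x) 0).mulVec y
    rw [h, Functor.map_smul, smul_apply', Matrix.smul_mulVec]

noncomputable def Mmat (y : Fin (G.obj r 0) → ℂ) (a : SVectn n) :
    Matrix (Fin (G.obj a 0)) (Fin (F.obj a 0)) ℂ :=
  LinearMap.toMatrix' (Tlin F r hr G y a)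

lemma Mmat_mulVec (y : Fin (G.obj r 0) → ℂ) (a : SVectn n) (x : Fin (F.obj a 0) → ℂ) :
    (Mmat F r hr G y a).mulVec x = (G.map (Psi F r hr a x) 0).mulVec y := by
  rw [Mmat, ← Matrix.toLin'_apply, Matrix.toLin'_toMatrix']; rfl

noncomputable def etaApp (y : Fin (G.obj r 0) → ℂ) (a : SVectn n) : F.obj a ⟶ G.obj a :=
  fun j => Fin.cases (motive := fun j => Matrix (Fin (G.obj a j)) (Fin (F.obj a j)) ℂ)
    (Mmat F r hr G y a) (fun i => i.elim0) j

lemma etaApp_zero (y : Fin (G.obj r 0) → ℂ) (a : SVectn n) :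
    etaApp F r hr G y a 0 = Mmat F r hr G y a := rfl

noncomputable def etaOf (y : Fin (G.obj r 0) → ℂ) : F ⟶ G where
  app a := etaApp F r hr G y a
  naturality a b g := by
    apply hom1_ext
    show etaApp F r hr G y b 0 * F.map g 0 = G.map g 0 * etaApp F r hr G y a 0
    rw [etaApp_zero, etaApp_zero]
    apply matrix_ext_mulVec
    intro v
    rw [← Matrix.mulVec_mulVec, ← Matrix.mulVec_mulVec, Mmat_mulVec, Mmat_mulVec]
    have hv : (F.map g 0).mulVec v = Phi F r b (Psi F r hr a v ≫ g) := by
      rw [Phi_natural F r g (Psi F r hr a v), Phi_Psi]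
    rw [hv, Psi_Phi, map1_comp G, ← Matrix.mulVec_mulVec]

include hr in
lemma E_surj : Function.Surjective (Efun F r G) := by
  intro y
  refine ⟨etaOf F r hr G y, ?_⟩
  show (etaApp F r hr G y r 0).mulVec (Phi F r r (𝟙 r)) = y
  rw [etaApp_zero, Mmat_mulVec, Psi_Phi, G.map_id, id_apply', Matrix.one_mulVec]

noncomputable def natEquiv : (F ⟶ G) ≃ (Fin (G.obj r 0) → ℂ) :=
  Equiv.ofBijective (Efun F r G) ⟨E_inj F r hr G, E_surj F r hr G⟩

end Iso
end Stmt15Aux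

/-- a ℂ-linear functor `F : SVect^n ⥤ SVect` with rank vector `r` is
represented by the object `(ℂ^{r₁},…,ℂ^{r_n})`, i.e. `F` is naturally isomorphic to
`Hom_{SVect^n}((ℂ^{r₁},…,ℂ^{r_n}), −)`; consequently, for any ℂ-linear
`G : SVect^n ⥤ SVect` with rank vector `s`, `Nat(F,G)` is in bijection with
`G(ℂ^{r₁},…,ℂ^{r_n}) ≅ ℂ^{r₁s₁+⋯+r_ns_n}`. -/
theorem stmt15 {n : ℕ} (F G : SVectn n ⥤ SVectn 1)
    [F.Additive] [F.Linear ℂ] [G.Additive] [G.Linear ℂ]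
    (r : SVectn n) (hr : ∀ j, r j = F.obj (unitObj n j) 0) :
    Nonempty (coyoneda.obj (Opposite.op r) ≅ F ⋙ USVect) ∧
    Nonempty ((F ⟶ G) ≃ (Fin (∑ j, r j * G.obj (unitObj n j) 0) → ℂ)) := by
  constructor
  · exact ⟨Stmt15Aux.repIso F r hr⟩
  · have hs : ∀ j, (fun j' => G.obj (unitObj n j') 0 : SVectn n) j = G.obj (unitObj n j) 0 :=
      fun _ => rfl
    let L : (∀ j, Matrix (Fin (r j)) (Fin (G.obj (unitObj n j) 0)) ℂ) ≃ₗ[ℂ]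
        (Fin (G.obj r 0) → ℂ) :=
      { Stmt15Aux.PhiEquiv G (fun j' => G.obj (unitObj n j') 0) hs r with
        map_add' := Stmt15Aux.Phi_add G (fun j' => G.obj (unitObj n j') 0) r
        map_smul' := Stmt15Aux.Phi_smul G (fun j' => G.obj (unitObj n j') 0) r }
    have hdim : G.obj r 0 = ∑ j, r j * G.obj (unitObj n j) 0 := by
      have h1 := LinearEquiv.finrank_eq L
      have h2 : ∀ r' s' : Fin n → ℕ,
          Module.finrank ℂ ((j : Fin n) → Matrix (Fin (r' j)) (Fin (s' j)) ℂ)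
          = ∑ j, r' j * s' j := by
        intro r' s'
        simp [Module.finrank_pi_fintype, Module.finrank_matrix]
      simpa [Module.finrank_fin_fun] using h1.symm.trans (h2 r (fun j => G.obj (unitObj n j) 0))
    exact ⟨(Stmt15Aux.natEquiv F r hr G).trans
      (Equiv.arrowCongr (finCongr hdim) (Equiv.refl ℂ))⟩
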